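/- Under hypothesis (gev) with eigenvalue μ = ρω (ρ ≥ 0, |ω| = 1) and height ν, let S_K be the running sum associated with C = V^(ν−1), and assume hypothesis (jsr_λ). If ρ < λ then sup_{x∈[0,1]} ‖S_K(x)‖ = O(λ^K) as K → ∞; if ρ = λ then sup_{x∈[0,1]} ‖S_K(x)‖ = O(K^ν λ^K) as K → ∞. -/

import Mathlib

/-!
Splitting off the first digit gives the self-similarity `S_{K+1}(x) = ∑_r A_r S_K(B x - r)`, where
`S_K(y) = 0` for `y < 0` and `S_K(y) = Q^K C` for `y ≥ 1`; so at each level at most one digit leads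
to a genuine running sum, the others contribute `0` or a full sum. Unrolling, and using the bound
`‖A_w‖ ≤ c λ^|w|` that (jsr_λ) gives for all words,
`‖S_K(x)‖ ≤ c λ^K (‖C‖ + B ∑_{m<K} ‖Q^m C‖ / λ^m)`.
Writing `Q = ρω + N` with `N^ν C = 0`, the binomial theorem gives
`‖Q^m C‖ = O(m^(ν-1) ρ'^m)` for every `ρ' ≥ ρ`, `ρ' > 0`: the series converges when `ρ < λ`,
and its partial sums are `O(K^ν)` when `ρ = λ`.
-/

open scoped Classical BigOperators
open Filter Asymptotics

attribute [local instance] Matrix.linftyOpNormedAddCommGroup Matrix.linftyOpNormedRing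

noncomputable section

/-- `A_w = A_{w_1} ⋯ A_{w_K}` for a word `w` of length `K` over the digit alphabet. -/
def wordProd {B d : ℕ} (A : Fin B → Matrix (Fin d) (Fin d) ℂ) {K : ℕ}
    (w : Fin K → Fin B) : Matrix (Fin d) (Fin d) ℂ :=
  ((List.ofFn w).map A).prod

/-- `(0.w)_B = Σ_{k=1}^K w_k B^{-k}`. -/
def wordVal {B K : ℕ} (w : Fin K → Fin B) : ℝ :=
  ∑ k : Fin K, (w k : ℝ) / (B : ℝ) ^ ((k : ℕ) + 1)

/-- The running sum `S_K(x) = Σ_{|w|=K, (0.w)_B ≤ x} A_w C`. -/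
def runSum {B d : ℕ} (A : Fin B → Matrix (Fin d) (Fin d) ℂ) (C : Fin d → ℂ)
    (K : ℕ) (x : ℝ) : Fin d → ℂ :=
  ∑ w : Fin K → Fin B, if wordVal w ≤ x then (wordProd A w).mulVec C else 0

/-- The basic dilation equation for data `ρ, ω, V`. -/
def DilationEq {B d : ℕ} (A : Fin B → Matrix (Fin d) (Fin d) ℂ) (ρ : ℝ) (ω : ℂ)
    (V : Fin d → ℂ) (Φ : ℝ → Fin d → ℂ) : Prop :=
  Φ 0 = 0 ∧ Φ 1 = V ∧
    ∀ r : Fin B, ∀ x : ℝ, (r : ℝ) / B ≤ x → x < ((r : ℝ) + 1) / B →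
      Φ x = ((ρ : ℂ) * ω)⁻¹ •
        ((∑ s ∈ Finset.univ.filter fun s : Fin B => s < r, (A s).mulVec V) +
          (A r).mulVec (Φ (B * x - r)))

open Finset Matrix

section Words

variable {B d : ℕ} (A : Fin B → Matrix (Fin d) (Fin d) ℂ)

lemma wordProd_zero (w : Fin 0 → Fin B) : wordProd A w = 1 := by
  simp [wordProd]

lemma wordProd_cons {K : ℕ} (r : Fin B) (w : Fin K → Fin B) :
    wordProd A (Fin.cons r w) = A r * wordProd A w := by
  simp [wordProd, List.ofFn_succ]

lemma wordProd_snoc {K : ℕ} (w : Fin K → Fin B) (r : Fin B) :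
    wordProd A (Fin.snoc w r) = wordProd A w * A r := by
  rw [wordProd, List.ofFn_succ', List.concat_eq_append, List.map_append, List.prod_append]
  simp [wordProd]

lemma wordProd_append {m n : ℕ} (w : Fin (m + n) → Fin B) :
    wordProd A w = wordProd A (fun i : Fin m => w (Fin.castAdd n i)) *
      wordProd A (fun i : Fin n => w (Fin.natAdd m i)) := by
  rw [wordProd, List.ofFn_add, List.map_append, List.prod_append]
  rfl

lemma sum_wordProd (K : ℕ) : ∑ w : Fin K → Fin B, wordProd A w = (∑ r, A r) ^ K := by
  induction K with
  | zero => simp [wordProd_zero]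
  | succ K ih =>
    rw [← (Fin.consEquiv fun _ => Fin B).sum_comp, Fintype.sum_prod_type, pow_succ', sum_mul]
    refine sum_congr rfl fun r _ => ?_
    rw [← ih, mul_sum]
    exact sum_congr rfl fun w _ => wordProd_cons A r w

end Words

lemma wordVal_cons {B K : ℕ} (r : Fin B) (w : Fin K → Fin B) :
    wordVal (Fin.cons r w) = ((r : ℝ) + wordVal w) / B := by
  simp only [wordVal, Fin.sum_univ_succ, Fin.cons_zero, Fin.cons_succ, Fin.val_succ, add_div,
    sum_div, div_div, pow_succ]
  simp

lemma wordVal_nonneg {B K : ℕ} (w : Fin K → Fin B) : 0 ≤ wordVal w :=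
  sum_nonneg fun _ _ => by positivity

lemma wordVal_lt_one {B : ℕ} : ∀ {K : ℕ} (w : Fin K → Fin B), wordVal w < 1
  | 0, w => by simp [wordVal]
  | K + 1, w => by
    have hB : (0 : ℝ) < B := by exact_mod_cast (w 0).pos
    have hr : ((w 0 : ℕ) : ℝ) + 1 ≤ B := by exact_mod_cast (w 0).isLt
    rw [← Fin.cons_self_tail w, wordVal_cons, div_lt_one hB]
    linarith [wordVal_lt_one (Fin.tail w)]

section JointSpectralRadius

variable {B d : ℕ} (A : Fin B → Matrix (Fin d) (Fin d) ℂ)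

lemma exists_norm_wordProd_le {lam : ℝ} (hlam : 0 < lam) {T : ℕ} (hT : 1 ≤ T)
    (hTw : ∀ w : Fin T → Fin B, ‖wordProd A w‖ ≤ lam ^ T) :
    ∃ c, 0 ≤ c ∧ ∀ (K : ℕ) (w : Fin K → Fin B), ‖wordProd A w‖ ≤ c * lam ^ K := by
  set c := ∑ s ∈ range T, ∑ w : Fin s → Fin B, ‖wordProd A w‖ / lam ^ s
  refine ⟨c, by positivity, fun K => ?_⟩
  induction K using Nat.strong_induction_on with
  | _ K ih =>
    intro w
    by_cases hK : K < T
    · have hw : ‖wordProd A w‖ / lam ^ K ≤ c :=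
        (single_le_sum (f := fun w : Fin K → Fin B => ‖wordProd A w‖ / lam ^ K)
          (fun _ _ => by positivity) (mem_univ w)).trans
          (single_le_sum (f := fun s => ∑ w : Fin s → Fin B, ‖wordProd A w‖ / lam ^ s)
            (fun _ _ => sum_nonneg fun _ _ => by positivity) (mem_range.2 hK))
      rwa [div_le_iff₀ (by positivity)] at hw
    · obtain ⟨n, rfl⟩ : ∃ n, K = T + n := ⟨K - T, by omega⟩
      rw [wordProd_append, pow_add, mul_left_comm]
      exact (norm_mul_le _ _).trans
        (mul_le_mul (hTw _) (ih n (by omega) _) (norm_nonneg _) (by positivity))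

end JointSpectralRadius

section RunningSum

variable {B d : ℕ} (A : Fin B → Matrix (Fin d) (Fin d) ℂ) (C : Fin d → ℂ)

lemma runSum_zero {x : ℝ} (hx : 0 ≤ x) : runSum A C 0 x = C := by
  simp [runSum, wordVal, hx, wordProd_zero]

lemma runSum_of_neg (K : ℕ) {x : ℝ} (hx : x < 0) : runSum A C K x = 0 :=
  sum_eq_zero fun w _ => if_neg (hx.trans_le (wordVal_nonneg w)).not_ge

lemma runSum_of_one_le (K : ℕ) {x : ℝ} (hx : 1 ≤ x) :
    runSum A C K x = (∑ r, A r) ^ K *ᵥ C := by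
  rw [runSum, ← sum_wordProd, sum_mulVec]
  exact sum_congr rfl fun w _ => if_pos ((wordVal_lt_one w).le.trans hx)

lemma runSum_succ (K : ℕ) (x : ℝ) :
    runSum A C (K + 1) x = ∑ r, A r *ᵥ runSum A C K (B * x - r) := by
  rw [runSum, ← (Fin.consEquiv fun _ => Fin B).sum_comp, Fintype.sum_prod_type]
  refine sum_congr rfl fun r _ => ?_
  have hB : (0 : ℝ) < B := by exact_mod_cast r.pos
  rw [runSum, mulVec_sum]
  refine sum_congr rfl fun w _ => ?_
  have hcond : wordVal (Fin.cons r w) ≤ x ↔ wordVal w ≤ B * x - r := by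
    rw [wordVal_cons, div_le_iff₀ hB]
    constructor <;> intro h <;> linarith
  change (if wordVal (Fin.cons r w) ≤ x then wordProd A (Fin.cons r w) *ᵥ C else 0) = _
  simp only [hcond, wordProd_cons, ← mulVec_mulVec, apply_ite (A r *ᵥ ·), mulVec_zero]

lemma norm_mulVec_runSum_le_of_notMem_Ico (M : Matrix (Fin d) (Fin d) ℂ) (K : ℕ) {x : ℝ}
    (hx : x ∉ Set.Ico 0 1) : ‖M *ᵥ runSum A C K x‖ ≤ ‖M‖ * ‖(∑ r, A r) ^ K *ᵥ C‖ := by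
  rcases lt_or_ge x 0 with hx0 | hx0
  · simp only [runSum_of_neg A C K hx0, mulVec_zero, norm_zero]
    positivity
  · rw [runSum_of_one_le A C K (not_lt.1 fun h => hx ⟨hx0, h⟩)]
    exact linfty_opNorm_mulVec _ _

end RunningSum

lemma card_filter_sub_mem_Ico_le_one (B : ℕ) (y : ℝ) :
    #{r : Fin B | y - r ∈ Set.Ico 0 1} ≤ 1 := by
  have hfloor : ∀ r : Fin B, y - r ∈ Set.Ico 0 1 → ⌊y⌋₊ = r := fun r ⟨h0, h1⟩ =>
    (Nat.floor_eq_iff (by linarith [(r : ℕ).cast_nonneg (α := ℝ)])).2 ⟨by linarith, by linarith⟩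
  refine card_le_one.2 fun a ha b hb => Fin.ext ?_
  rw [mem_filter] at ha hb
  rw [← hfloor a ha.2, ← hfloor b hb.2]

section RunningSumBound

variable {B d : ℕ} (A : Fin B → Matrix (Fin d) (Fin d) ℂ) (C : Fin d → ℂ)

/-- Carrying the prefix `p` along lets the word bound `c λ^n` apply to whole products rather
than factor by factor. -/
theorem norm_wordProd_mulVec_runSum_le {c lam : ℝ} (hlam : 0 < lam) (hc0 : 0 ≤ c)
    (hc : ∀ (K : ℕ) (w : Fin K → Fin B), ‖wordProd A w‖ ≤ c * lam ^ K) (K : ℕ) {n : ℕ}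
    (p : Fin n → Fin B) (x : ℝ) :
    ‖wordProd A p *ᵥ runSum A C K x‖ ≤
      c * lam ^ (n + K) * (‖C‖ + B * ∑ m ∈ range K, ‖(∑ r, A r) ^ m *ᵥ C‖ / lam ^ m) := by
  induction K generalizing n x with
  | zero =>
    simp only [range_zero, sum_empty, mul_zero, add_zero]
    rcases lt_or_ge x 0 with hx | hx
    · simp only [runSum_of_neg A C 0 hx, mulVec_zero, norm_zero]
      positivity
    · rw [runSum_zero A C hx]
      exact (linfty_opNorm_mulVec _ _).trans
        (mul_le_mul_of_nonneg_right (hc n p) (norm_nonneg _))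
  | succ K ih =>
    set Q := ∑ r, A r
    set S := ∑ m ∈ range K, ‖Q ^ m *ᵥ C‖ / lam ^ m
    set R := c * lam ^ (n + 1 + K) * (‖C‖ + B * S)
    set b := c * lam ^ (n + 1) * ‖Q ^ K *ᵥ C‖
    have hR : 0 ≤ R := by positivity
    have hterm : ∀ r : Fin B, ‖wordProd A (Fin.snoc p r) *ᵥ runSum A C K (B * x - r)‖ ≤
        if B * x - r ∈ Set.Ico 0 1 then R else b := by
      intro r
      split_ifs with h
      · exact ih _ _
      · exact (norm_mulVec_runSum_le_of_notMem_Ico A C _ K h).trans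
          (mul_le_mul_of_nonneg_right (hc _ _) (norm_nonneg _))
    calc ‖wordProd A p *ᵥ runSum A C (K + 1) x‖
        = ‖∑ r, wordProd A (Fin.snoc p r) *ᵥ runSum A C K (B * x - r)‖ := by
          simp only [runSum_succ, mulVec_sum, mulVec_mulVec, wordProd_snoc]
      _ ≤ ∑ r : Fin B, if B * x - r ∈ Set.Ico 0 1 then R else b :=
          (norm_sum_le _ _).trans (sum_le_sum fun r _ => hterm r)
      _ ≤ 1 * R + B * b := by
          rw [sum_ite, sum_const, sum_const, nsmul_eq_mul, nsmul_eq_mul]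
          gcongr
          · exact_mod_cast card_filter_sub_mem_Ico_le_one B (B * x)
          · exact_mod_cast (card_filter_le _ _).trans (card_fin B).le
      _ = _ := by
          rw [sum_range_succ]
          field_simp
          ring

theorem norm_runSum_le {c lam : ℝ} (hlam : 0 < lam) (hc0 : 0 ≤ c)
    (hc : ∀ (K : ℕ) (w : Fin K → Fin B), ‖wordProd A w‖ ≤ c * lam ^ K) (K : ℕ) (x : ℝ) :
    ‖runSum A C K x‖ ≤
      c * lam ^ K * (‖C‖ + B * ∑ m ∈ range K, ‖(∑ r, A r) ^ m *ᵥ C‖ / lam ^ m) := by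
  simpa [wordProd_zero] using norm_wordProd_mulVec_runSum_le A C hlam hc0 hc K finZeroElim x

theorem norm_iSup_norm_runSum_le {c lam : ℝ} (hlam : 0 < lam) (hc0 : 0 ≤ c)
    (hc : ∀ (K : ℕ) (w : Fin K → Fin B), ‖wordProd A w‖ ≤ c * lam ^ K) (s : Set ℝ) (K : ℕ) :
    ‖⨆ x : s, ‖runSum A C K x‖‖ ≤
      c * lam ^ K * (‖C‖ + B * ∑ m ∈ range K, ‖(∑ r, A r) ^ m *ᵥ C‖ / lam ^ m) := by
  rw [Real.norm_of_nonneg (Real.iSup_nonneg fun _ => norm_nonneg _)]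
  exact Real.iSup_le (fun x => norm_runSum_le A C hlam hc0 hc K x)
    ((norm_nonneg _).trans (norm_runSum_le A C hlam hc0 hc K 0))

end RunningSumBound

section JordanChain

variable {n R : Type*} [Fintype n] [DecidableEq n] [CommRing R]

lemma sub_smul_one_pow_mulVec_eq_zero (Q : Matrix n n R) (μ : R) {ν : ℕ} (hν : 0 < ν)
    (V : Fin ν → n → R) (hV0 : Q *ᵥ V ⟨0, hν⟩ = μ • V ⟨0, hν⟩)
    (hVs : ∀ j : ℕ, ∀ hj : j + 1 < ν,
      Q *ᵥ V ⟨j + 1, hj⟩ = μ • V ⟨j + 1, hj⟩ + V ⟨j, Nat.lt_of_succ_lt hj⟩) :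
    (Q - μ • 1) ^ ν *ᵥ V ⟨ν - 1, by omega⟩ = 0 := by
  have hchain : ∀ j (hj : j < ν), (Q - μ • 1) ^ (j + 1) *ᵥ V ⟨j, hj⟩ = 0 := by
    intro j
    induction j with
    | zero => intro hj; simp [sub_mulVec, hV0, smul_mulVec]
    | succ j ih =>
      intro hj
      rw [pow_succ, ← mulVec_mulVec, sub_mulVec, hVs j hj, smul_mulVec, one_mulVec,
        add_sub_cancel_left]
      exact ih _
  have := hchain (ν - 1) (by omega)
  rwa [Nat.sub_add_cancel hν] at this

lemma pow_mulVec_eq_sum_of_sub_smul_one_pow_mulVec_eq_zero (Q : Matrix n n R) (μ : R) {ν : ℕ}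
    {v : n → R} (hv : (Q - μ • 1) ^ ν *ᵥ v = 0) (m : ℕ) :
    Q ^ m *ᵥ v = ∑ i ∈ range ν, ((m.choose i : R) * μ ^ (m - i)) • ((Q - μ • 1) ^ i *ᵥ v) := by
  set N := Q - μ • 1
  have hcomm : Commute N (μ • 1) := (Commute.one_right N).smul_right μ
  set f : ℕ → n → R := fun i => ((m.choose i : R) * μ ^ (m - i)) • (N ^ i *ᵥ v)
  have hbinom : Q ^ m *ᵥ v = ∑ i ∈ range (m + 1), f i := by
    rw [← sub_add_cancel Q (μ • 1), hcomm.add_pow, sum_mulVec]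
    refine sum_congr rfl fun i _ => ?_
    rw [smul_pow, one_pow, ← mulVec_mulVec, natCast_mulVec, mulVec_smul, ← mulVec_mulVec,
      smul_mulVec, one_mulVec, mulVec_smul, smul_smul]
  have hbig : ∀ i, ν ≤ i → f i = 0 := fun i hi => by
    obtain ⟨k, rfl⟩ := Nat.exists_eq_add_of_le' hi
    simp only [f, pow_add, ← mulVec_mulVec, hv, mulVec_zero, smul_zero]
  have hsmall : ∀ i, m < i → f i = 0 := fun i hi => by
    simp [f, Nat.choose_eq_zero_of_lt hi]
  rw [hbinom, sum_subset (range_subset_range.2 (Nat.le_add_right (m + 1) ν)),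
    sum_subset (range_subset_range.2 (Nat.le_add_left ν (m + 1)))]
  · exact fun i _ hi => hbig i (by simpa using hi)
  · exact fun i _ hi => hsmall i (by simpa using hi)

end JordanChain

lemma choose_mul_pow_sub_le {ρ : ℝ} (hρ : 0 < ρ) {i k : ℕ} (hik : i ≤ k) (m : ℕ) :
    (m.choose i : ℝ) * ρ ^ (m - i) ≤ (m + 1) ^ k * ρ ^ m / ρ ^ i := by
  rcases le_or_gt i m with him | hmi
  · rw [pow_sub₀ _ hρ.ne' him, ← div_eq_mul_inv, ← mul_div_assoc]
    gcongr
    calc (m.choose i : ℝ) ≤ (m : ℝ) ^ i := by exact_mod_cast Nat.choose_le_pow m i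
      _ ≤ (m + 1) ^ i := by gcongr; linarith
      _ ≤ (m + 1) ^ k := pow_le_pow_right₀ (by linarith [Nat.cast_nonneg (α := ℝ) m]) hik
  · rw [Nat.choose_eq_zero_of_lt hmi, Nat.cast_zero, zero_mul]
    positivity

lemma exists_norm_pow_mulVec_le {n 𝕜 : Type*} [Fintype n] [DecidableEq n] [RCLike 𝕜]
    (Q : Matrix n n 𝕜) (μ : 𝕜) {ν : ℕ} {v : n → 𝕜} (hv : (Q - μ • 1) ^ ν *ᵥ v = 0) {ρ : ℝ}
    (hρ : 0 < ρ) (hμ : ‖μ‖ ≤ ρ) :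
    ∃ c, ∀ m : ℕ, ‖Q ^ m *ᵥ v‖ ≤ c * ((m + 1) ^ (ν - 1) * ρ ^ m) := by
  refine ⟨∑ i ∈ range ν, ‖(Q - μ • 1) ^ i *ᵥ v‖ / ρ ^ i, fun m => ?_⟩
  rw [pow_mulVec_eq_sum_of_sub_smul_one_pow_mulVec_eq_zero Q μ hv, sum_mul]
  refine (norm_sum_le _ _).trans (sum_le_sum fun i hi => ?_)
  rw [norm_smul, norm_mul, norm_pow, RCLike.norm_natCast]
  calc (m.choose i : ℝ) * ‖μ‖ ^ (m - i) * ‖(Q - μ • 1) ^ i *ᵥ v‖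
      ≤ (m.choose i : ℝ) * ρ ^ (m - i) * ‖(Q - μ • 1) ^ i *ᵥ v‖ := by gcongr
    _ ≤ (m + 1) ^ (ν - 1) * ρ ^ m / ρ ^ i * ‖(Q - μ • 1) ^ i *ᵥ v‖ := by
        gcongr
        exact choose_mul_pow_sub_le hρ (by have := mem_range.1 hi; omega) m
    _ = _ := by ring

lemma summable_div_pow_of_le_mul_pow {g : ℕ → ℝ} (hg0 : ∀ m, 0 ≤ g m) {c ρ lam : ℝ} {k : ℕ}
    (hg : ∀ m, g m ≤ c * ((m + 1) ^ k * ρ ^ m)) (hρ : 0 < ρ) (hρlam : ρ < lam) :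
    Summable fun m => g m / lam ^ m := by
  have hlam : 0 < lam := hρ.trans hρlam
  set r := ρ / lam
  have hr : ‖r‖ < 1 := by
    rw [Real.norm_of_nonneg (by positivity)]
    exact (div_lt_one hlam).2 hρlam
  have hs : Summable fun m : ℕ => ((m + 1 : ℕ) : ℝ) ^ k * r ^ (m + 1) :=
    (summable_nat_add_iff (f := fun n : ℕ => (n : ℝ) ^ k * r ^ n) 1).2
      (summable_pow_mul_geometric_of_norm_lt_one k hr)
  refine (hs.mul_left (c / r)).of_nonneg_of_le (fun m => div_nonneg (hg0 m) (by positivity))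
    fun m => ?_
  calc g m / lam ^ m ≤ c * ((m + 1) ^ k * ρ ^ m) / lam ^ m := by gcongr; exact hg m
    _ = _ := by
        simp only [r, div_pow]
        push_cast
        field_simp
        ring

lemma sum_range_div_pow_le_of_le_mul_pow {g : ℕ → ℝ} (hg0 : ∀ m, 0 ≤ g m) {c lam : ℝ} {k : ℕ}
    (hlam : 0 < lam) (hg : ∀ m, g m ≤ c * ((m + 1) ^ k * lam ^ m)) (K : ℕ) :
    ∑ m ∈ range K, g m / lam ^ m ≤ c * K ^ (k + 1) := by
  have hc : 0 ≤ c := by simpa using (hg0 0).trans (hg 0)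
  calc ∑ m ∈ range K, g m / lam ^ m ≤ ∑ _m ∈ range K, c * (K : ℝ) ^ k :=
        sum_le_sum fun m hm => by
          have hmK : (m : ℝ) + 1 ≤ K := by exact_mod_cast mem_range.1 hm
          rw [div_le_iff₀ (by positivity)]
          calc g m ≤ c * ((m + 1) ^ k * lam ^ m) := hg m
            _ ≤ c * ((K : ℝ) ^ k * lam ^ m) := by gcongr
            _ = _ := by ring
    _ = c * K ^ (k + 1) := by
        rw [sum_const, card_range, nsmul_eq_mul, pow_succ]
        ring

lemma isBigO_pow_of_le_add_mul_sum {f u : ℕ → ℝ} {a b lam : ℝ} (hb : 0 ≤ b) (hlam : 0 ≤ lam)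
    (hu0 : ∀ m, 0 ≤ u m) (hu : Summable u)
    (hf : ∀ K, ‖f K‖ ≤ (a + b * ∑ m ∈ range K, u m) * lam ^ K) :
    f =O[atTop] fun K => lam ^ K := by
  refine IsBigO.of_bound (a + b * ∑' m, u m) (Eventually.of_forall fun K => (hf K).trans ?_)
  rw [Real.norm_of_nonneg (by positivity)]
  gcongr
  exact hu.sum_le_tsum _ fun m _ => hu0 m

lemma isBigO_pow_mul_pow_of_le_add_mul_sum {f u : ℕ → ℝ} {a b c lam : ℝ} {ν : ℕ} (ha : 0 ≤ a)
    (hb : 0 ≤ b) (hlam : 0 ≤ lam) (hu : ∀ K, ∑ m ∈ range K, u m ≤ c * K ^ ν)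
    (hf : ∀ K, ‖f K‖ ≤ (a + b * ∑ m ∈ range K, u m) * lam ^ K) :
    f =O[atTop] fun K => (K : ℝ) ^ ν * lam ^ K := by
  refine IsBigO.of_bound (a + b * c) ((eventually_ge_atTop 1).mono fun K hK => (hf K).trans ?_)
  have hKν : (1 : ℝ) ≤ (K : ℝ) ^ ν := one_le_pow₀ (by exact_mod_cast hK)
  rw [Real.norm_of_nonneg (by positivity)]
  calc (a + b * ∑ m ∈ range K, u m) * lam ^ K ≤ (a * K ^ ν + b * (c * K ^ ν)) * lam ^ K := by
        gcongr ?_ * _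
        exact add_le_add (le_mul_of_one_le_right ha hKν) (by gcongr; exact hu K)
    _ = (a + b * c) * (K ^ ν * lam ^ K) := by ring

/-- noise, generalized eigenvector case: under (gev) with eigenvalue `ρω`
and height `ν`, and (jsr_λ), the running sums associated with `V^(ν-1)` are `O(λ^K)` if
`ρ < λ` and `O(K^ν λ^K)` if `ρ = λ`. -/
theorem runSum_noise_jordan (B d ν : ℕ) (hν : 0 < ν)
    (A : Fin B → Matrix (Fin d) (Fin d) ℂ)
    (ρ : ℝ) (hρ : 0 ≤ ρ) (ω : ℂ) (hω : ‖ω‖ = 1)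
    -- hypothesis (gev)
    (V : Fin ν → Fin d → ℂ)
    (hV0 : (∑ r, A r).mulVec (V ⟨0, hν⟩) = ((ρ : ℂ) * ω) • V ⟨0, hν⟩)
    (hVs : ∀ j : ℕ, ∀ hj : j + 1 < ν,
      (∑ r, A r).mulVec (V ⟨j + 1, hj⟩) =
        ((ρ : ℂ) * ω) • V ⟨j + 1, hj⟩ + V ⟨j, Nat.lt_of_succ_lt hj⟩)
    -- hypothesis (jsr_λ)
    (lam : ℝ) (hlam : 0 < lam)
    (hjsr : ∃ T : ℕ, 1 ≤ T ∧ ∀ w : Fin T → Fin B, ‖wordProd A w‖ ≤ lam ^ T) :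
    (ρ < lam →
      (fun K : ℕ => ⨆ x : Set.Icc (0:ℝ) 1, ‖runSum A (V ⟨ν - 1, by omega⟩) K x‖)
        =O[atTop] fun K => lam ^ K) ∧
    (ρ = lam →
      (fun K : ℕ => ⨆ x : Set.Icc (0:ℝ) 1, ‖runSum A (V ⟨ν - 1, by omega⟩) K x‖)
        =O[atTop] fun K => (K : ℝ) ^ ν * lam ^ K) := by
  obtain ⟨T, hT, hTw⟩ := hjsr
  obtain ⟨c, hc0, hc⟩ := exists_norm_wordProd_le A hlam hT hTw
  set C := V ⟨ν - 1, by omega⟩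
  set u : ℕ → ℝ := fun m => ‖(∑ r, A r) ^ m *ᵥ C‖ / lam ^ m
  have hsup (K : ℕ) : ‖⨆ x : Set.Icc (0:ℝ) 1, ‖runSum A C K x‖‖ ≤
      (c * ‖C‖ + c * B * ∑ m ∈ range K, u m) * lam ^ K :=
    (norm_iSup_norm_runSum_le A C hlam hc0 hc _ K).trans_eq (by ring)
  have hnil := sub_smul_one_pow_mulVec_eq_zero _ _ hν V hV0 hVs
  have hμ : ‖(ρ : ℂ) * ω‖ = ρ := by
    rw [norm_mul, hω, mul_one, Complex.norm_real, Real.norm_of_nonneg hρ]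
  refine ⟨fun hρlam => ?_, fun hρlam => ?_⟩
  · have hρ' : 0 < (ρ + lam) / 2 := by linarith
    obtain ⟨c', hc'⟩ := exists_norm_pow_mulVec_le _ _ hnil hρ' (hμ.trans_le (by linarith))
    have hu := summable_div_pow_of_le_mul_pow (lam := lam) (fun _ => norm_nonneg _) hc' hρ'
      (by linarith)
    exact isBigO_pow_of_le_add_mul_sum (by positivity) hlam.le (fun _ => by positivity) hu hsup
  · obtain ⟨c', hc'⟩ := exists_norm_pow_mulVec_le _ _ hnil hlam (hμ.trans hρlam).le
    refine isBigO_pow_mul_pow_of_le_add_mul_sum (c := c') (by positivity) (by positivity) hlam.le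
      (fun K => ?_) hsup
    simpa [Nat.sub_add_cancel hν] using
      sum_range_div_pow_le_of_le_mul_pow (fun _ => norm_nonneg _) hlam hc' K
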